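/- If the ALCQI concept C_dom ⊓ 𝕋(C) is satisfiable, then the ALCQP(p,s) concept C is satisfiable. -/

import Mathlib

/-! ALCQP(p,s) and its reification translation 𝕋 into ALCQI. -/

/-- The two permutation operators: cyclic shift `p` and swap `s`. -/
inductive PS : Type
  | p : PS
  | s : PS

/-- The permutation of `Fin (n+2)` associated with an operator: for `p`, tuples of `p(R)`
are `t ∘ ρ` where `ρ 0 = n+1` (last coordinate moved to the front); for `s`, the
transposition of the last two coordinates. -/
def permOfOp (n : ℕ) : PS → Equiv.Perm (Fin (n + 2))
  | .p => (finRotate (n + 2)).symm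
  | .s => Equiv.swap (Fin.castSucc (Fin.last n)) (Fin.last (n + 1))

/-- Action of one operator on an `(n+2)`-ary relation. -/
def applyOp {A : Type*} (n : ℕ) (o : PS) (R : Set (Fin (n + 2) → A)) :
    Set (Fin (n + 2) → A) :=
  (fun t => t ∘ ⇑(permOfOp n o)) '' R

/-- Action of a permutation string (word over `{p,s}`) on an `(n+2)`-ary relation. -/
def applyString {A : Type*} (n : ℕ) : List PS → Set (Fin (n + 2) → A) → Set (Fin (n + 2) → A)
  | [], R => R
  | o :: rest, R => applyString n rest (applyOp n o R)

/-- The permutation associated with a permutation string `π`: `permOfString n π i` is the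
source coordinate of `R` sent to position `i` of `R^π`. -/
def permOfString (n : ℕ) : List PS → Equiv.Perm (Fin (n + 2))
  | [] => 1
  | o :: rest => (permOfString n rest).trans (permOfOp n o)

/-- ALCQP(p,s) concepts: a role `R` has arity `ar R + 2` and may be modified by a
permutation string `π`; `atLeast k R π cs` is `≥k R^π.(C₂,…,Cₙ)` with `n = ar R + 2`. -/
inductive ALCQP (Cn Rn : Type) (ar : Rn → ℕ) : Type
  | top : ALCQP Cn Rn ar
  | bot : ALCQP Cn Rn ar
  | atom (A : Cn) : ALCQP Cn Rn ar
  | neg (C : ALCQP Cn Rn ar) : ALCQP Cn Rn ar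
  | inter (C D : ALCQP Cn Rn ar) : ALCQP Cn Rn ar
  | atLeast (k : ℕ) (R : Rn) (π : List PS) (cs : Fin (ar R + 1) → ALCQP Cn Rn ar) :
      ALCQP Cn Rn ar

/-- An interpretation with polyadic roles of arity `ar R + 2`. -/
structure PInterp (Cn Rn : Type) (ar : Rn → ℕ) : Type 1 where
  Dom : Type
  cInt : Cn → Set Dom
  rInt : (R : Rn) → Set (Fin (ar R + 2) → Dom)

/-- Semantics of ALCQP(p,s): `u ∈ (≥k R^π.(C₂,…,Cₙ))^I` iff there are at least `k`
tuples `(u, v₂, …, vₙ) ∈ (R^π)^I` with `vᵢ ∈ Cᵢ^I` for each `i`. -/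
def qpsem {Cn Rn : Type} {ar : Rn → ℕ} (I : PInterp Cn Rn ar) :
    ALCQP Cn Rn ar → Set I.Dom
  | .top => Set.univ
  | .bot => ∅
  | .atom A => I.cInt A
  | .neg C => (qpsem I C)ᶜ
  | .inter C D => qpsem I C ∩ qpsem I D
  | .atLeast k R π cs =>
      { u | ∃ f : Fin k → (Fin (ar R + 2) → I.Dom), Function.Injective f ∧
          ∀ j, f j ∈ applyString (ar R) π (I.rInt R) ∧ f j 0 = u ∧
            ∀ i : Fin (ar R + 1), f j i.succ ∈ qpsem I (cs i) }

/-- ALCQI concepts (with qualified number restrictions and inverse roles). -/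
inductive ALCQI (Cn Rn : Type) : Type
  | top : ALCQI Cn Rn
  | bot : ALCQI Cn Rn
  | atom (A : Cn) : ALCQI Cn Rn
  | neg (C : ALCQI Cn Rn) : ALCQI Cn Rn
  | inter (C D : ALCQI Cn Rn) : ALCQI Cn Rn
  | atLeast (k : ℕ) (R : Rn) (inv : Bool) (C : ALCQI Cn Rn) : ALCQI Cn Rn

/-- Binary interpretations for ALCQI. -/
structure Interp (Cn Rn : Type) : Type 1 where
  Dom : Type
  cInt : Cn → Set Dom
  rInt : Rn → Set (Dom × Dom)

/-- Semantics of ALCQI. -/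
def qsem {Cn Rn : Type} (I : Interp Cn Rn) : ALCQI Cn Rn → Set I.Dom
  | .top => Set.univ
  | .bot => ∅
  | .atom A => I.cInt A
  | .neg C => (qsem I C)ᶜ
  | .inter C D => qsem I C ∩ qsem I D
  | .atLeast k R b C =>
      { u | ∃ f : Fin k → I.Dom, Function.Injective f ∧
          ∀ i, (if b then ((f i, u) ∈ I.rInt R) else ((u, f i) ∈ I.rInt R)) ∧
            f i ∈ qsem I C }

/-- Target concept names of the translation: old concept names, the fresh `C_dom`,
and a fresh `L_R` for each role name `R`. -/
abbrev TCn (Cn Rn : Type) : Type := Cn ⊕ (Unit ⊕ Rn)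

/-- The fresh concept `C_dom`. -/
def cdom {Cn Rn : Type} : ALCQI (TCn Cn Rn) ℕ := .atom (.inr (.inl ()))

/-- The fresh concept `L_R`. -/
def lR {Cn Rn : Type} (R : Rn) : ALCQI (TCn Cn Rn) ℕ := .atom (.inr (.inr R))

/-- Finite conjunction. -/
def bigAnd {Cn Rn : Type} : List (ALCQI Cn Rn) → ALCQI Cn Rn
  | [] => .top
  | c :: cs => .inter c (bigAnd cs)

/-- `∃F.C` as `≥1 F.C`. -/
def exI {Cn Rn : Type} (F : Rn) (C : ALCQI Cn Rn) : ALCQI Cn Rn := .atLeast 1 F false C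

/-- `∀F.C` as `¬ ≥1 F.(¬C)`. -/
def allI {Cn Rn : Type} (F : Rn) (C : ALCQI Cn Rn) : ALCQI Cn Rn :=
  .neg (.atLeast 1 F false (.neg C))

/-- `=1 F.⊤`: the out-degree of `F` is exactly one. -/
def eqOneTop {Cn Rn : Type} (F : Rn) : ALCQI Cn Rn :=
  .inter (.atLeast 1 F false .top) (.neg (.atLeast 2 F false .top))

/-- `χ_R`: `L_R` holds and every other `L_S` fails. -/
noncomputable def chi {Cn Rn : Type} [Fintype Rn] [DecidableEq Rn] (R : Rn) : ALCQI (TCn Cn Rn) ℕ :=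
  .inter (lR R) (bigAnd (((Finset.univ.erase R).toList).map fun S => .neg (lR S)))

/-- `Outdeg_n`: each `F_i` (for `i < n`) has out-degree exactly one with range in `C_dom`. -/
def outdeg {Cn Rn : Type} (n : ℕ) : ALCQI (TCn Cn Rn) ℕ :=
  bigAnd ((List.range n).map fun i => .inter (eqOneTop i) (allI i cdom))

/-- The reification translation `𝕋` from ALCQP(p,s) into ALCQI: homomorphic on Booleans,
and `𝕋(≥k R^π.(C₂,…,Cₙ)) = ≥k F_{π₁}⁻¹.(¬C_dom ⊓ χ_R ⊓ Outdeg_n ⊓ ∃F_{π₂}.𝕋(C₂) ⊓ … ⊓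
∃F_{πₙ}.𝕋(Cₙ))`, where `πᵢ` is the source coordinate of `R` sent to position `i` by `π`. -/
noncomputable def reify {Cn Rn : Type} [Fintype Rn] [DecidableEq Rn] {ar : Rn → ℕ} :
    ALCQP Cn Rn ar → ALCQI (TCn Cn Rn) ℕ
  | .top => .top
  | .bot => .bot
  | .atom A => .atom (.inl A)
  | .neg C => .neg (reify C)
  | .inter C D => .inter (reify C) (reify D)
  | .atLeast k R π cs =>
      .atLeast k ((permOfString (ar R) π 0 : Fin (ar R + 2)).val) true
        (bigAnd ((.neg cdom) :: chi R :: outdeg (ar R + 2) ::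
          List.ofFn fun i : Fin (ar R + 1) =>
            exI ((permOfString (ar R) π i.succ : Fin (ar R + 2)).val) (reify (cs i))))

/-- Concept satisfiability for ALCQP(p,s). -/
def satQP {Cn Rn : Type} {ar : Rn → ℕ} (C : ALCQP Cn Rn ar) : Prop :=
  ∃ (I : PInterp Cn Rn ar) (u : I.Dom), u ∈ qpsem I C

/-- Concept satisfiability for ALCQI. -/
def satQI {Cn Rn : Type} (C : ALCQI Cn Rn) : Prop :=
  ∃ (I : Interp Cn Rn) (u : I.Dom), u ∈ qsem I C

/-! A model of `C_dom ⊓ 𝕋(C)` represents each tuple of an `n`-ary role `R` by a lantern `l`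
(an element of `¬C_dom ⊓ χ_R ⊓ Outdeg_n`), whose features `F_0, …, F_{n-1}` are functional.
Reading the tuples off the lanterns directly would identify distinct lanterns with the same
feature values and break the counting in `≥k`. Instead of unravelling the model into a tree,
take the domain `Δ × ℤ^(Δ)` and let a lantern `l` with offset `g` contribute the tuple
`j ↦ (F_j(l), g + j • e_l)`. Translation by `g` gives each element `x` exactly one tuple with
`x` at position `r` for each lantern reaching the first coordinate of `x` through `F_r`, and the
`e_l`-component keeps the tuples of distinct lanterns distinct. So the tuples counted by
`(≥k R^π.(C₂,…,Cₙ))` at `(v, g)` are in bijection with the lanterns counted by its translation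
at `v`, and by induction `(v, g)` satisfies `D` in the new interpretation iff `v` satisfies
`𝕋(D)` in the given one. -/

theorem Set.BijOn.exists_injective_fin_iff {α β : Type*} {s : Set α} {t : Set β} {φ : α → β}
    (hφ : Set.BijOn φ s t) (k : ℕ) :
    (∃ f : Fin k → α, Function.Injective f ∧ ∀ m, f m ∈ s) ↔
      ∃ g : Fin k → β, Function.Injective g ∧ ∀ m, g m ∈ t := by
  constructor
  · rintro ⟨f, hf, hfs⟩
    exact ⟨φ ∘ f, fun m m' h => hf (hφ.injOn (hfs m) (hfs m') h), fun m => hφ.mapsTo (hfs m)⟩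
  · rintro ⟨g, hg, hgt⟩
    let e := hφ.equiv
    refine ⟨fun m => (e.symm ⟨g m, hgt m⟩ : α), fun m m' h => ?_, fun m => (e.symm _).2⟩
    exact hg (congrArg Subtype.val (e.symm.injective (Subtype.ext h)))

theorem applyString_eq_image {A : Type*} (n : ℕ) (π : List PS) (S : Set (Fin (n + 2) → A)) :
    applyString n π S = (· ∘ ⇑(permOfString n π)) '' S := by
  induction π generalizing S with
  | nil => simp [applyString, permOfString]
  | cons o rest ih =>
    simp only [applyString, applyOp, ih, permOfString, Set.image_image]
    rfl

theorem mem_applyString {A : Type*} (n : ℕ) (π : List PS) (S : Set (Fin (n + 2) → A))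
    (t : Fin (n + 2) → A) :
    t ∈ applyString n π S ↔ t ∘ ⇑(permOfString n π).symm ∈ S := by
  rw [applyString_eq_image]
  constructor
  · rintro ⟨s, hs, rfl⟩
    simpa [Function.comp_def] using hs
  · exact fun h => ⟨_, h, by ext; simp⟩

theorem bijOn_comp_permOfString {A : Type*} (n : ℕ) (π : List PS) (S : Set (Fin (n + 2) → A))
    (x : A) (P : Fin (n + 1) → A → Prop) :
    Set.BijOn (· ∘ ⇑(permOfString n π))
      {s | s ∈ S ∧ s (permOfString n π 0) = x ∧ ∀ i, P i (s (permOfString n π i.succ))}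
      {t | t ∈ applyString n π S ∧ t 0 = x ∧ ∀ i, P i (t i.succ)} :=
  (Equiv.arrowCongr (permOfString n π).symm (Equiv.refl A)).bijOn fun s => by
    change s ∘ _ ∈ applyString n π S ∧ _ ↔ _
    rw [mem_applyString, Equiv.symm_symm, Function.comp_assoc, Equiv.self_comp_symm,
      Function.comp_id]
    rfl

section ALCQI

variable {Cn Rn : Type} (I : Interp Cn Rn)

theorem mem_qsem_bigAnd {L : List (ALCQI Cn Rn)} {x : I.Dom} :
    x ∈ qsem I (bigAnd L) ↔ ∀ c ∈ L, x ∈ qsem I c := by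
  induction L with
  | nil => simp [bigAnd, qsem]
  | cons c cs ih => simp [bigAnd, qsem, ih]

theorem mem_qsem_exI {F : Rn} {D : ALCQI Cn Rn} {x : I.Dom} :
    x ∈ qsem I (exI F D) ↔ ∃ w, (x, w) ∈ I.rInt F ∧ w ∈ qsem I D := by
  constructor
  · rintro ⟨f, -, hf⟩
    exact ⟨f 0, by simpa using (hf 0).1, (hf 0).2⟩
  · rintro ⟨w, hw, hD⟩
    exact ⟨fun _ => w, Function.injective_of_subsingleton _, fun _ => ⟨by simpa using hw, hD⟩⟩

theorem mem_qsem_eqOneTop {F : Rn} {x : I.Dom} :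
    x ∈ qsem I (eqOneTop F) ↔ ∃! w, (x, w) ∈ I.rInt F := by
  change x ∈ qsem I (exI F .top) ∧ _ ↔ _
  rw [mem_qsem_exI]
  constructor
  · rintro ⟨⟨w, hw, -⟩, hle⟩
    refine ⟨w, hw, fun w' hw' => by_contra fun hne => hle ⟨![w', w], ?_, ?_⟩⟩
    · intro a b
      fin_cases a <;> fin_cases b <;> simp [hne, Ne.symm hne]
    · intro i
      fin_cases i <;> simp [hw, hw', qsem]
  · rintro ⟨w, hw, huniq⟩
    refine ⟨⟨w, hw, trivial⟩, fun ⟨f, hf, hfF⟩ => ?_⟩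
    have h01 : f 0 = f 1 :=
      (huniq _ (by simpa using (hfF 0).1)).trans (huniq _ (by simpa using (hfF 1).1)).symm
    exact absurd (hf h01) (by decide)

end ALCQI

open Classical in
noncomputable def Interp.succ {Cn Rn : Type} (I : Interp Cn Rn) (l : I.Dom) (F : Rn) : I.Dom :=
  if h : ∃ w, (l, w) ∈ I.rInt F then h.choose else l

theorem Interp.mem_rInt_iff_eq_succ {Cn Rn : Type} (I : Interp Cn Rn) {l w : I.Dom} {F : Rn}
    (h : ∃! w, (l, w) ∈ I.rInt F) : (l, w) ∈ I.rInt F ↔ w = I.succ l F := by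
  have hex : ∃ w, (l, w) ∈ I.rInt F := h.exists
  have hsucc : (l, I.succ l F) ∈ I.rInt F := by
    rw [Interp.succ, dif_pos hex]
    exact hex.choose_spec
  exact ⟨fun hw => h.unique hw hsucc, fun hw => hw ▸ hsucc⟩

section Lanterns

variable {Cn Rn : Type} [Fintype Rn] [DecidableEq Rn] (I : Interp (TCn Cn Rn) ℕ)

def IsLantern (R : Rn) (n : ℕ) (l : I.Dom) : Prop :=
  l ∉ qsem I cdom ∧ l ∈ qsem I (chi R) ∧ l ∈ qsem I (outdeg n)

variable {I}

theorem IsLantern.mem_rInt_iff {R : Rn} {n i : ℕ} {l w : I.Dom} (hl : IsLantern I R n l)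
    (hi : i < n) : (l, w) ∈ I.rInt i ↔ w = I.succ l i := by
  have hi := (mem_qsem_bigAnd I).1 hl.2.2 _ (List.mem_map.2 ⟨i, List.mem_range.2 hi, rfl⟩)
  exact I.mem_rInt_iff_eq_succ ((mem_qsem_eqOneTop I).1 hi.1)

theorem mem_qsem_lanternBody {R : Rn} {n m : ℕ} {idx : Fin m → ℕ} (hidx : ∀ i, idx i < n)
    {D : Fin m → ALCQI (TCn Cn Rn) ℕ} {l : I.Dom} :
    l ∈ qsem I (bigAnd (.neg cdom :: chi R :: outdeg n :: List.ofFn fun i => exI (idx i) (D i)))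
      ↔ IsLantern I R n l ∧ ∀ i, I.succ l (idx i) ∈ qsem I (D i) := by
  simp only [mem_qsem_bigAnd, List.forall_mem_cons, List.forall_mem_ofFn_iff, mem_qsem_exI]
  constructor
  · rintro ⟨hcdom, hchi, hout, hD⟩
    have hl : IsLantern I R n l := ⟨hcdom, hchi, hout⟩
    refine ⟨hl, fun i => ?_⟩
    obtain ⟨w, hw, hwD⟩ := hD i
    rwa [← (hl.mem_rInt_iff (hidx i)).1 hw]
  · rintro ⟨hl, hD⟩
    exact ⟨hl.1, hl.2.1, hl.2.2, fun i => ⟨_, (hl.mem_rInt_iff (hidx i)).2 rfl, hD i⟩⟩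

variable (I)

noncomputable def lanternTuple {n : ℕ} (l : I.Dom) (g : I.Dom →₀ ℤ) :
    Fin n → I.Dom × (I.Dom →₀ ℤ) :=
  fun j => (I.succ l j, g + Finsupp.single l (j : ℤ))

noncomputable def lanternTuples (R : Rn) (n : ℕ) : Set (Fin n → I.Dom × (I.Dom →₀ ℤ)) :=
  {t | ∃ l g, IsLantern I R n l ∧ lanternTuple I l g = t}

noncomputable def unreify (ar : Rn → ℕ) : PInterp Cn Rn ar where
  Dom := I.Dom × (I.Dom →₀ ℤ)
  cInt A := {x | x.1 ∈ I.cInt (.inl A)}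
  rInt R := lanternTuples I R (ar R + 2)

theorem bijOn_lanternTuple (R : Rn) {n : ℕ} (x : I.Dom × (I.Dom →₀ ℤ)) (r : Fin (n + 2))
    (Q : (Fin (n + 2) → I.Dom) → Prop) :
    Set.BijOn (fun l => lanternTuple I l (x.2 - Finsupp.single l (r : ℤ)))
      {l | (l, x.1) ∈ I.rInt r ∧ IsLantern I R (n + 2) l ∧ Q fun j => I.succ l j}
      {t | t ∈ lanternTuples I R (n + 2) ∧ t r = x ∧ Q fun j => (t j).1} := by
  refine ⟨?_, ?_, ?_⟩
  · rintro l ⟨hr, hl, hQ⟩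
    refine ⟨⟨l, _, hl, rfl⟩, Prod.ext ((hl.mem_rInt_iff r.isLt).1 hr).symm ?_, hQ⟩
    simp [lanternTuple]
  · rintro l ⟨-, hl, -⟩ l' ⟨-, hl', -⟩ h
    obtain ⟨j, hj⟩ := exists_ne r
    have hsnd := congrArg Prod.snd (congrFun h j)
    simp only [lanternTuple] at hsnd
    have hjr : ((j : ℕ) : ℤ) - (r : ℕ) ≠ 0 :=
      sub_ne_zero.2 (by exact_mod_cast Fin.val_ne_of_ne hj)
    refine (Finsupp.single_left_inj hjr).1 ?_
    calc Finsupp.single l (((j : ℕ) : ℤ) - (r : ℕ))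
        = x.2 - Finsupp.single l ((r : ℕ) : ℤ) + Finsupp.single l ((j : ℕ) : ℤ) - x.2 := by
          rw [Finsupp.single_sub]; abel
      _ = x.2 - Finsupp.single l' ((r : ℕ) : ℤ) + Finsupp.single l' ((j : ℕ) : ℤ) - x.2 := by
          rw [hsnd]
      _ = Finsupp.single l' (((j : ℕ) : ℤ) - (r : ℕ)) := by rw [Finsupp.single_sub]; abel
  · rintro _ ⟨⟨l, g, hl, rfl⟩, hr, hQ⟩
    refine ⟨l, ⟨(hl.mem_rInt_iff r.isLt).2 ?_, hl, hQ⟩, ?_⟩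
    · rw [← hr]; rfl
    · rw [← hr]
      simp [lanternTuple]

theorem mem_qpsem_unreify_iff {ar : Rn → ℕ} (C : ALCQP Cn Rn ar) (x : (unreify I ar).Dom) :
    x ∈ qpsem (unreify I ar) C ↔ x.1 ∈ qsem I (reify C) := by
  induction C generalizing x with
  | top | bot => simp [qpsem, qsem, reify]
  | atom A => rfl
  | neg C ih => exact not_congr (ih x)
  | inter C D ihC ihD => exact and_congr (ihC x) (ihD x)
  | atLeast k R π cs ih =>
    have hbij := (bijOn_comp_permOfString (ar R) π _ x
      (fun i y => y.1 ∈ qsem I (reify (cs i)))).comp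
      (bijOn_lanternTuple I R x (permOfString (ar R) π 0)
        fun w => ∀ i, w (permOfString (ar R) π i.succ) ∈ qsem I (reify (cs i)))
    simp only [qpsem, qsem, reify, ih, if_true, Set.mem_ofPred_eq,
      mem_qsem_lanternBody fun i => (permOfString (ar R) π i.succ).isLt]
    exact (hbij.exists_injective_fin_iff k).symm

end Lanterns

/-- If the ALCQI concept `C_dom ⊓ 𝕋(C)` is satisfiable, then the ALCQP(p,s)
concept `C` is satisfiable. -/
theorem satQI_implies_satQP {Cn Rn : Type} [Fintype Rn] [DecidableEq Rn] {ar : Rn → ℕ}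
    (C : ALCQP Cn Rn ar) (h : satQI (.inter cdom (reify C))) :
    satQP C := by
  obtain ⟨I, u, -, hu⟩ := h
  exact ⟨unreify I ar, (u, 0), (mem_qpsem_unreify_iff I C (u, 0)).2 hu⟩
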